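/- arXiv:1102.4524 — 6 statements merged into one kernel-verified Lean document; each statement's English description precedes it below -/
import Mathlib

section
/- With the sequence (x_n) defined by x_0 = 0 and x_{n+1} = max_{g∈𝒢} g(x_n), where each g ∈ 𝒢 is K-bilipschitz and 𝒢 is symmetric, the gaps δ_n = x_{n+1} - x_n satisfy K⁻¹·δ_{n+1} ≤ δ_n ≤ K·δ_{n+1} for all n ∈ ℤ. -/
open Set Filter

noncomputable section

/-- With `x₀ = 0` and `x_{n+1} = max_{g ∈ 𝒢} g (x_n)` for a finite symmetric set of
`K`-bilipschitz homeomorphisms, the gaps `δ_n = x_{n+1} - x_n` satisfy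
`K⁻¹ δ_{n+1} ≤ δ_n ≤ K δ_{n+1}`. -/
theorem seq_gap_distortion (S : Finset (ℝ ≃ₜ ℝ)) (hne : S.Nonempty)
    (hmono : ∀ g ∈ S, Monotone ⇑g) (K : ℝ) (hK : 1 ≤ K)
    (hbil : ∀ g ∈ S, ∀ x y : ℝ, K⁻¹ * |y - x| ≤ |g y - g x| ∧ |g y - g x| ≤ K * |y - x|)
    (hsym : ∀ g ∈ S, g.symm ∈ S)
    (hnofix : ∀ p : ℝ, ∃ g ∈ S, g p ≠ p)
    (x : ℤ → ℝ) (hx0 : x 0 = 0)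
    (hxrec : ∀ n : ℤ, IsGreatest {y : ℝ | ∃ g ∈ S, y = g (x n)} (x (n + 1))) :
    ∀ n : ℤ, K⁻¹ * (x (n + 2) - x (n + 1)) ≤ x (n + 1) - x n ∧
      x (n + 1) - x n ≤ K * (x (n + 2) - x (n + 1)) := by
  have hK0 : (0:ℝ) < K := lt_of_lt_of_le zero_lt_one hK
  have hKi : (0:ℝ) < K⁻¹ := inv_pos.mpr hK0
  have hmon : ∀ n : ℤ, x n ≤ x (n + 1) := by
    intro n
    obtain ⟨g, hg, hgne⟩ := hnofix (x n)
    rcases lt_or_gt_of_ne hgne with hlt | hgt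
    · have hgs := hsym g hg
      have h1 : x n ≤ g.symm (x n) := by
        have := hmono g.symm hgs hlt.le
        rwa [Homeomorph.symm_apply_apply] at this
      exact h1.trans ((hxrec n).2 ⟨g.symm, hgs, rfl⟩)
    · exact hgt.le.trans ((hxrec n).2 ⟨g, hg, rfl⟩)
  intro n
  obtain ⟨g, hg, hgeq⟩ := (hxrec n).1
  have e : n + 1 + 1 = n + 2 := by ring
  obtain ⟨h, hh, hheq⟩ := (hxrec (n+1)).1
  rw [e] at hheq
  have h1 : x n ≤ x (n+1) := hmon n
  have hg2 : g (x (n+1)) ≤ x (n+2) := by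
    have := (hxrec (n+1)).2 ⟨g, hg, rfl⟩
    rwa [e] at this
  have hh0 : h (x n) ≤ x (n+1) := (hxrec n).2 ⟨h, hh, rfl⟩
  have hgm : g (x n) ≤ g (x (n+1)) := hmono g hg h1
  have hhm : h (x n) ≤ h (x (n+1)) := hmono h hh h1
  have hb1 := (hbil g hg (x n) (x (n+1))).1
  have hb2 := (hbil h hh (x n) (x (n+1))).2
  rw [abs_of_nonneg (sub_nonneg.mpr h1), abs_of_nonneg (sub_nonneg.mpr hgm)] at hb1
  rw [abs_of_nonneg (sub_nonneg.mpr h1), abs_of_nonneg (sub_nonneg.mpr hhm)] at hb2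
  constructor
  · have key : x (n+2) - x (n+1) ≤ K * (x (n+1) - x n) := by
      calc x (n+2) - x (n+1) = h (x (n+1)) - x (n+1) := by rw [hheq]
        _ ≤ h (x (n+1)) - h (x n) := by linarith
        _ ≤ K * (x (n+1) - x n) := hb2
    have := mul_le_mul_of_nonneg_left key hKi.le
    rwa [← mul_assoc, inv_mul_cancel₀ hK0.ne', one_mul] at this
  · have key : K⁻¹ * (x (n+1) - x n) ≤ x (n+2) - x (n+1) := by
      calc K⁻¹ * (x (n+1) - x n) ≤ g (x (n+1)) - g (x n) := hb1
        _ = g (x (n+1)) - x (n+1) := by rw [hgeq]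
        _ ≤ x (n+2) - x (n+1) := by linarith
    have := mul_le_mul_of_nonneg_left key hK0.le
    rwa [← mul_assoc, mul_inv_cancel₀ hK0.ne', one_mul] at this
end
end

section
/- Let G be a group acting on ℝ by K-bilipschitz orientation-preserving homeomorphisms with finite symmetric generating set 𝒢 and no global fixed point, let (x_n) be defined by x_0=0, x_{n+1} = max_{g∈𝒢} g(x_n), and let φ be the homeomorphism mapping x_n to n and affine on each [x_n, x_{n+1}]. Then for every g ∈ 𝒢, the conjugate ρ(g) = φ ∘ g ∘ φ⁻¹ is K³-bilipschitz. -/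
/-!
On `[n, n + 1]` the conjugate `φ ∘ g ∘ φ⁻¹` is a composite of three maps with controlled
slopes. `φ⁻¹` is affine onto `[xₙ, xₙ₊₁]` with slope `δₙ = xₙ₊₁ - xₙ`. The generator `g` has
slopes in `[K⁻¹, K]`, and maximality of `xₙ₊₁` together with symmetry of `S` shows that `g`
maps `[xₙ, xₙ₊₁]` into `[xₙ₋₁, xₙ₊₂]`. There `φ` has slopes `δₙ₋₁⁻¹, δₙ⁻¹, δₙ₊₁⁻¹`, all in
`[(K δₙ)⁻¹, K δₙ⁻¹]` because consecutive gaps differ by a factor at most `K`. Hence the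
conjugate has slopes in `[K⁻², K²]` on every unit interval, and so on all of `ℝ`: a slope bound
`[a, b]` is the monotonicity of `f - a • id` and `b • id - f`, which glues across common
endpoints. The gaps are positive because a generator moving `xₙ`, or its inverse, moves it to
the right.
-/

open Set

theorem monotone_of_monotoneOn_Icc_intCast {β : Type*} [Preorder β] {f : ℝ → β}
    (h : ∀ n : ℤ, MonotoneOn f (Icc (n : ℝ) (n + 1))) : Monotone f := by
  have hIcc : ∀ (n : ℤ) (k : ℕ), MonotoneOn f (Icc (n : ℝ) (n + k)) := by
    intro n k
    induction k with
    | zero =>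
      rw [Nat.cast_zero, add_zero, Icc_self]
      exact subsingleton_singleton.monotoneOn f
    | succ k ih =>
      have hk := h (n + k)
      push_cast at hk ⊢
      have hnk : (n : ℝ) ≤ n + k := le_add_of_nonneg_right k.cast_nonneg
      have hk1 : (n : ℝ) + k ≤ n + k + 1 := le_add_of_nonneg_right zero_le_one
      rw [← add_assoc, ← Icc_union_Icc_eq_Icc hnk hk1]
      exact ih.union_right hk (isGreatest_Icc hnk) (isLeast_Icc hk1)
  intro u v huv
  obtain ⟨k, hk⟩ := Int.le.dest ((Int.floor_le_floor huv).trans (Int.floor_le_ceil v))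
  have hv : v ≤ ⌊u⌋ + (k : ℝ) := by exact_mod_cast hk ▸ Int.le_ceil v
  exact hIcc ⌊u⌋ k ⟨Int.floor_le u, huv.trans hv⟩ ⟨(Int.floor_le u).trans huv, hv⟩ huv

def SlopeBoundedOn (f : ℝ → ℝ) (a b : ℝ) (s : Set ℝ) : Prop :=
  ∀ u ∈ s, ∀ v ∈ s, u ≤ v → a * (v - u) ≤ f v - f u ∧ f v - f u ≤ b * (v - u)

section SlopeBoundedOn

variable {f g : ℝ → ℝ} {a b c d : ℝ} {s t : Set ℝ}

theorem slopeBoundedOn_iff : SlopeBoundedOn f a b s ↔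
    MonotoneOn (fun u => f u - a * u) s ∧ MonotoneOn (fun u => b * u - f u) s := by
  constructor
  · intro h
    refine ⟨fun u hu v hv huv => ?_, fun u hu v hv huv => ?_⟩ <;>
    · have := h u hu v hv huv
      dsimp only
      linarith [this.1, this.2]
  · rintro ⟨h₁, h₂⟩ u hu v hv huv
    have h₁ := h₁ hu hv huv
    have h₂ := h₂ hu hv huv
    dsimp only at h₁ h₂
    constructor <;> linarith

theorem SlopeBoundedOn.Icc_union {p q r : ℝ} (h₁ : SlopeBoundedOn f a b (Icc p q))
    (h₂ : SlopeBoundedOn f a b (Icc q r)) (hpq : p ≤ q) (hqr : q ≤ r) :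
    SlopeBoundedOn f a b (Icc p r) := by
  rw [slopeBoundedOn_iff] at *
  rw [← Icc_union_Icc_eq_Icc hpq hqr]
  exact ⟨h₁.1.union_right h₂.1 (isGreatest_Icc hpq) (isLeast_Icc hqr),
    h₁.2.union_right h₂.2 (isGreatest_Icc hpq) (isLeast_Icc hqr)⟩

theorem SlopeBoundedOn.univ_of_Icc_intCast
    (h : ∀ n : ℤ, SlopeBoundedOn f a b (Icc (n : ℝ) (n + 1))) : SlopeBoundedOn f a b univ := by
  simp only [slopeBoundedOn_iff, monotoneOn_univ] at h ⊢
  exact ⟨monotone_of_monotoneOn_Icc_intCast fun n => (h n).1,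
    monotone_of_monotoneOn_Icc_intCast fun n => (h n).2⟩

theorem SlopeBoundedOn.mono_bounds {a' b' : ℝ} (h : SlopeBoundedOn f a b s) (ha : a' ≤ a)
    (hb : b ≤ b') : SlopeBoundedOn f a' b' s := by
  intro u hu v hv huv
  have hvu : 0 ≤ v - u := sub_nonneg.2 huv
  obtain ⟨h₁, h₂⟩ := h u hu v hv huv
  exact ⟨(mul_le_mul_of_nonneg_right ha hvu).trans h₁,
    h₂.trans (mul_le_mul_of_nonneg_right hb hvu)⟩

theorem SlopeBoundedOn.comp (hg : SlopeBoundedOn g c d t) (hf : SlopeBoundedOn f a b s)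
    (hst : MapsTo f s t) (ha : 0 ≤ a) (hc : 0 ≤ c) (hd : 0 ≤ d) :
    SlopeBoundedOn (g ∘ f) (c * a) (d * b) s := by
  intro u hu v hv huv
  obtain ⟨hf₁, hf₂⟩ := hf u hu v hv huv
  have hfuv : f u ≤ f v := sub_nonneg.1 ((mul_nonneg ha (sub_nonneg.2 huv)).trans hf₁)
  obtain ⟨hg₁, hg₂⟩ := hg (f u) (hst hu) (f v) (hst hv) hfuv
  simp only [Function.comp_apply, mul_assoc]
  exact ⟨(mul_le_mul_of_nonneg_left hf₁ hc).trans hg₁,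
    hg₂.trans (mul_le_mul_of_nonneg_left hf₂ hd)⟩

theorem slopeBoundedOn_of_eq_affine {m p q : ℝ} (hf : ∀ u ∈ s, f u = q + m * (u - p)) :
    SlopeBoundedOn f m m s := by
  intro u hu v hv _
  have h : f v - f u = m * (v - u) := by rw [hf u hu, hf v hv]; ring
  exact ⟨h.ge, h.le⟩

theorem SlopeBoundedOn.abs_sub_bounds (h : SlopeBoundedOn f a b univ) (ha : 0 ≤ a) (u v : ℝ) :
    a * |v - u| ≤ |f v - f u| ∧ |f v - f u| ≤ b * |v - u| := by
  wlog huv : u ≤ v generalizing u v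
  · rw [abs_sub_comm v u, abs_sub_comm (f v)]
    exact this v u (le_of_not_ge huv)
  obtain ⟨h₁, h₂⟩ := h u trivial v trivial huv
  have hvu : 0 ≤ v - u := sub_nonneg.2 huv
  rw [abs_of_nonneg hvu, abs_of_nonneg ((mul_nonneg ha hvu).trans h₁)]
  exact ⟨h₁, h₂⟩

theorem Monotone.slopeBoundedOn_univ (hf : Monotone f)
    (h : ∀ u v, a * |v - u| ≤ |f v - f u| ∧ |f v - f u| ≤ b * |v - u|) :
    SlopeBoundedOn f a b univ := by
  intro u _ v _ huv
  simpa only [abs_of_nonneg (sub_nonneg.2 huv), abs_of_nonneg (sub_nonneg.2 (hf huv))] using h u v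

end SlopeBoundedOn

theorem Homeomorph.lt_apply_or_lt_symm_apply {g : ℝ ≃ₜ ℝ} (hg : Monotone g) {p : ℝ}
    (hp : g p ≠ p) : p < g p ∨ p < g.symm p := by
  rcases hp.lt_or_gt with hlt | hgt
  · refine .inr (lt_of_not_ge fun hle => hlt.not_ge ?_)
    simpa using hg hle
  · exact .inl hgt

theorem inv_bounds_of_le_mul {d e K : ℝ} (hd : 0 < d) (he : 0 < e) (hde : d ≤ K * e)
    (hed : e ≤ K * d) : (K * d)⁻¹ ≤ e⁻¹ ∧ e⁻¹ ≤ K * d⁻¹ := by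
  refine ⟨inv_anti₀ he hed, ?_⟩
  rw [← div_eq_mul_inv, le_div_iff₀ hd, inv_mul_le_iff₀ he]
  rwa [mul_comm]

section GeneratorSequence

variable {S : Finset (ℝ ≃ₜ ℝ)} {K : ℝ} {x : ℤ → ℝ}

theorem strictMono_of_isGreatest_apply (hmono : ∀ g ∈ S, Monotone ⇑g)
    (hsym : ∀ g ∈ S, g.symm ∈ S) (hnofix : ∀ p : ℝ, ∃ g ∈ S, g p ≠ p)
    (hxrec : ∀ n : ℤ, IsGreatest {y : ℝ | ∃ g ∈ S, y = g (x n)} (x (n + 1))) :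
    StrictMono x := by
  refine strictMono_int_of_lt_succ fun n => ?_
  obtain ⟨g, hg, hgx⟩ := hnofix (x n)
  rcases Homeomorph.lt_apply_or_lt_symm_apply (hmono g hg) hgx with h | h
  · exact h.trans_le ((hxrec n).2 ⟨g, hg, rfl⟩)
  · exact h.trans_le ((hxrec n).2 ⟨g.symm, hsym g hg, rfl⟩)

theorem mapsTo_Icc_of_isGreatest_apply (hmono : ∀ g ∈ S, Monotone ⇑g)
    (hsym : ∀ g ∈ S, g.symm ∈ S)
    (hxrec : ∀ n : ℤ, IsGreatest {y : ℝ | ∃ g ∈ S, y = g (x n)} (x (n + 1)))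
    {g : ℝ ≃ₜ ℝ} (hg : g ∈ S) (n : ℤ) :
    MapsTo g (Icc (x n) (x (n + 1))) (Icc (x (n - 1)) (x (n + 1 + 1))) := by
  rintro u ⟨hxu, hux⟩
  refine ⟨?_, (hmono g hg hux).trans ((hxrec (n + 1)).2 ⟨g, hg, rfl⟩)⟩
  have h : g.symm (x (n - 1)) ≤ x n := by
    simpa using (hxrec (n - 1)).2 ⟨g.symm, hsym g hg, rfl⟩
  simpa using hmono g hg (h.trans hxu)

theorem gap_succ_le_of_isGreatest_apply (hslope : ∀ g ∈ S, SlopeBoundedOn g K⁻¹ K univ)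
    (hxrec : ∀ n : ℤ, IsGreatest {y : ℝ | ∃ g ∈ S, y = g (x n)} (x (n + 1)))
    (hx : Monotone x) (n : ℤ) :
    x (n + 1 + 1) - x (n + 1) ≤ K * (x (n + 1) - x n) := by
  obtain ⟨g, hg, hgx⟩ := (hxrec (n + 1)).1
  have hle : g (x n) ≤ x (n + 1) := (hxrec n).2 ⟨g, hg, rfl⟩
  have := (hslope g hg (x n) trivial (x (n + 1)) trivial (hx (by omega))).2
  rw [hgx]
  linarith

theorem gap_le_mul_gap_succ_of_isGreatest_apply (hK : 0 < K)
    (hslope : ∀ g ∈ S, SlopeBoundedOn g K⁻¹ K univ)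
    (hxrec : ∀ n : ℤ, IsGreatest {y : ℝ | ∃ g ∈ S, y = g (x n)} (x (n + 1)))
    (hx : Monotone x) (n : ℤ) :
    x (n + 1) - x n ≤ K * (x (n + 1 + 1) - x (n + 1)) := by
  obtain ⟨g, hg, hgx⟩ := (hxrec n).1
  have hle : g (x (n + 1)) ≤ x (n + 1 + 1) := (hxrec (n + 1)).2 ⟨g, hg, rfl⟩
  have := (hslope g hg (x n) trivial (x (n + 1)) trivial (hx (by omega))).1
  rw [← inv_mul_le_iff₀ hK]
  rw [← hgx] at this
  linarith

end GeneratorSequence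

section PiecewiseAffine

variable {K : ℝ} {x : ℤ → ℝ} {φ : ℝ ≃ₜ ℝ}

theorem slopeBoundedOn_Icc_of_eq_affine
    (hφ : ∀ n : ℤ, ∀ t ∈ Icc (x n) (x (n + 1)),
      φ t = (n : ℝ) + (t - x n) / (x (n + 1) - x n))
    (m : ℤ) :
    SlopeBoundedOn φ (x (m + 1) - x m)⁻¹ (x (m + 1) - x m)⁻¹ (Icc (x m) (x (m + 1))) :=
  slopeBoundedOn_of_eq_affine fun u hu => by rw [hφ m u hu, div_eq_inv_mul]

theorem slopeBoundedOn_Icc_pred_succ_of_eq_affine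
    (hφ : ∀ n : ℤ, ∀ t ∈ Icc (x n) (x (n + 1)),
      φ t = (n : ℝ) + (t - x n) / (x (n + 1) - x n))
    (hK : 1 ≤ K) (hx : StrictMono x)
    (hgap₁ : ∀ n : ℤ, x (n + 1 + 1) - x (n + 1) ≤ K * (x (n + 1) - x n))
    (hgap₂ : ∀ n : ℤ, x (n + 1) - x n ≤ K * (x (n + 1 + 1) - x (n + 1))) (n : ℤ) :
    SlopeBoundedOn φ (K * (x (n + 1) - x n))⁻¹ (K * (x (n + 1) - x n)⁻¹)
      (Icc (x (n - 1)) (x (n + 1 + 1))) := by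
  have hδ : ∀ m : ℤ, 0 < x (m + 1) - x m := fun m => sub_pos.2 (hx (lt_add_one m))
  have piece : ∀ m : ℤ, x (m + 1) - x m ≤ K * (x (n + 1) - x n) →
      x (n + 1) - x n ≤ K * (x (m + 1) - x m) →
      SlopeBoundedOn φ (K * (x (n + 1) - x n))⁻¹ (K * (x (n + 1) - x n)⁻¹)
        (Icc (x m) (x (m + 1))) := fun m h₁ h₂ =>
    have hb := inv_bounds_of_le_mul (hδ n) (hδ m) h₂ h₁
    (slopeBoundedOn_Icc_of_eq_affine hφ m).mono_bounds hb.1 hb.2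
  have hleft := piece (n - 1) (by simpa using hgap₂ (n - 1)) (by simpa using hgap₁ (n - 1))
  have hmid := piece n (le_mul_of_one_le_left (hδ n).le hK) (le_mul_of_one_le_left (hδ n).le hK)
  have hright := piece (n + 1) (hgap₁ n) (hgap₂ n)
  rw [sub_add_cancel] at hleft
  exact (hleft.Icc_union hmid (hx.monotone (by omega)) (hx.monotone (by omega))).Icc_union hright
    (hx.monotone (by omega)) (hx.monotone (by omega))

theorem symm_apply_eq_and_mem_of_eq_affine
    (hφ : ∀ n : ℤ, ∀ t ∈ Icc (x n) (x (n + 1)),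
      φ t = (n : ℝ) + (t - x n) / (x (n + 1) - x n))
    {n : ℤ} (hδ : 0 < x (n + 1) - x n) {t : ℝ} (ht : t ∈ Icc (n : ℝ) (n + 1)) :
    φ.symm t = x n + (x (n + 1) - x n) * (t - n) ∧
      φ.symm t ∈ Icc (x n) (x (n + 1)) := by
  have hmem : x n + (x (n + 1) - x n) * (t - n) ∈ Icc (x n) (x (n + 1)) :=
    ⟨le_add_of_nonneg_right (mul_nonneg hδ.le (sub_nonneg.2 ht.1)), by nlinarith [ht.2]⟩
  have heq : φ.symm t = x n + (x (n + 1) - x n) * (t - n) := by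
    rw [Homeomorph.symm_apply_eq, hφ n _ hmem]
    field_simp
    ring
  exact ⟨heq, heq ▸ hmem⟩

theorem slopeBoundedOn_Icc_conj
    (hφ : ∀ n : ℤ, ∀ t ∈ Icc (x n) (x (n + 1)),
      φ t = (n : ℝ) + (t - x n) / (x (n + 1) - x n))
    (hK : 0 < K) (hx : StrictMono x) {g : ℝ → ℝ} (hg : SlopeBoundedOn g K⁻¹ K univ)
    (hgx : ∀ n : ℤ, MapsTo g (Icc (x n) (x (n + 1))) (Icc (x (n - 1)) (x (n + 1 + 1))))
    (hφx : ∀ n : ℤ, SlopeBoundedOn φ (K * (x (n + 1) - x n))⁻¹ (K * (x (n + 1) - x n)⁻¹)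
      (Icc (x (n - 1)) (x (n + 1 + 1)))) (n : ℤ) :
    SlopeBoundedOn (φ ∘ g ∘ φ.symm) (K ^ 2)⁻¹ (K ^ 2) (Icc (n : ℝ) (n + 1)) := by
  have hδ : 0 < x (n + 1) - x n := sub_pos.2 (hx (lt_add_one n))
  have hsymm : SlopeBoundedOn φ.symm (x (n + 1) - x n) (x (n + 1) - x n) (Icc (n : ℝ) (n + 1)) :=
    slopeBoundedOn_of_eq_affine fun t ht => (symm_apply_eq_and_mem_of_eq_affine hφ hδ ht).1
  have hmaps : MapsTo (g ∘ φ.symm) (Icc (n : ℝ) (n + 1)) (Icc (x (n - 1)) (x (n + 1 + 1))) :=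
    (hgx n).comp fun t ht => (symm_apply_eq_and_mem_of_eq_affine hφ hδ ht).2
  have hconj := (hφx n).comp (hg.comp hsymm (mapsTo_univ _ _) hδ.le (by positivity) hK.le)
    hmaps (by positivity) (by positivity) (by positivity)
  refine hconj.mono_bounds (le_of_eq ?_) (le_of_eq ?_) <;> field_simp

end PiecewiseAffine

theorem conjugated_generators_bilipschitz_general
    (S : Finset (ℝ ≃ₜ ℝ))
    (hmono : ∀ g ∈ S, Monotone ⇑g) (K : ℝ) (hK : 1 ≤ K)
    (hbil : ∀ g ∈ S, ∀ x y : ℝ, K⁻¹ * |y - x| ≤ |g y - g x| ∧ |g y - g x| ≤ K * |y - x|)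
    (hsym : ∀ g ∈ S, g.symm ∈ S)
    (hnofix : ∀ p : ℝ, ∃ g ∈ S, g p ≠ p)
    (x : ℤ → ℝ)
    (hxrec : ∀ n : ℤ, IsGreatest {y : ℝ | ∃ g ∈ S, y = g (x n)} (x (n + 1)))
    (φ : ℝ ≃ₜ ℝ)
    (hφ : ∀ n : ℤ, ∀ t ∈ Icc (x n) (x (n + 1)),
      φ t = (n : ℝ) + (t - x n) / (x (n + 1) - x n))
    :
    ∀ g ∈ S, ∀ s t : ℝ,
      (K ^ 3)⁻¹ * |t - s| ≤ |φ (g (φ.symm t)) - φ (g (φ.symm s))| ∧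
      |φ (g (φ.symm t)) - φ (g (φ.symm s))| ≤ K ^ 3 * |t - s| := by
  have hK₀ : 0 < K := zero_lt_one.trans_le hK
  have hslope : ∀ g ∈ S, SlopeBoundedOn g K⁻¹ K univ := fun g hg =>
    (hmono g hg).slopeBoundedOn_univ (hbil g hg)
  have hx := strictMono_of_isGreatest_apply hmono hsym hnofix hxrec
  have hφloc := slopeBoundedOn_Icc_pred_succ_of_eq_affine hφ hK hx
    (gap_succ_le_of_isGreatest_apply hslope hxrec hx.monotone)
    (gap_le_mul_gap_succ_of_isGreatest_apply hK₀ hslope hxrec hx.monotone)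
  intro g hg s t
  have hloc := slopeBoundedOn_Icc_conj hφ hK₀ hx (hslope g hg)
    (mapsTo_Icc_of_isGreatest_apply hmono hsym hxrec hg) hφloc
  exact ((SlopeBoundedOn.univ_of_Icc_intCast hloc).mono_bounds
    (inv_anti₀ (by positivity) (pow_le_pow_right₀ hK (by norm_num)))
    (pow_le_pow_right₀ hK (by norm_num))).abs_sub_bounds (by positivity) s t

/-- Conjugating a `K`-bilipschitz action (finite symmetric generating set `𝒢`, no global
fixed point) by the piecewise-affine homeomorphism `φ` sending `x_n` to `n` yields
generators `ρ(g) = φ ∘ g ∘ φ⁻¹` that are `K³`-bilipschitz. -/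
theorem conjugated_generators_bilipschitz
    (S : Finset (ℝ ≃ₜ ℝ)) (hne : S.Nonempty)
    (hmono : ∀ g ∈ S, Monotone ⇑g) (K : ℝ) (hK : 1 ≤ K)
    (hbil : ∀ g ∈ S, ∀ x y : ℝ, K⁻¹ * |y - x| ≤ |g y - g x| ∧ |g y - g x| ≤ K * |y - x|)
    (hsym : ∀ g ∈ S, g.symm ∈ S)
    (hnofix : ∀ p : ℝ, ∃ g ∈ S, g p ≠ p)
    (x : ℤ → ℝ) (hx0 : x 0 = 0)
    (hxrec : ∀ n : ℤ, IsGreatest {y : ℝ | ∃ g ∈ S, y = g (x n)} (x (n + 1)))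
    (φ : ℝ ≃ₜ ℝ)
    (hφ : ∀ n : ℤ, ∀ t ∈ Icc (x n) (x (n + 1)),
      φ t = (n : ℝ) + (t - x n) / (x (n + 1) - x n))
    :
    ∀ g ∈ S, ∀ s t : ℝ,
      (K ^ 3)⁻¹ * |t - s| ≤ |φ (g (φ.symm t)) - φ (g (φ.symm s))| ∧
      |φ (g (φ.symm t)) - φ (g (φ.symm s))| ≤ K ^ 3 * |t - s| :=
  conjugated_generators_bilipschitz_general S hmono K hK hbil hsym hnofix x hxrec φ hφ
end

section
/- In the setting of the piecewise-affine conjugation φ sending x_n to n, for every generator g ∈ 𝒢 and every x ∈ ℝ, the conjugated map ρ(g) = φ∘g∘φ⁻¹ satisfies x - 2 ≤ ρ(g)(x) ≤ x + 2. -/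
/-!
Because `x (n + 1)` is the largest image of `x n` and `𝒢` is symmetric, every generator satisfies
`x (n - 1) ≤ g (x n) ≤ x (n + 1)`; in particular `x` is nondecreasing, so the homeomorphism `φ`,
which sends `x n` to `n`, is increasing. Hence the conjugate
`ρ(g) = φ ∘ g ∘ φ⁻¹` is a monotone map sending each integer `n` into `[n - 1, n + 1]`, and a
monotone map with that property moves every real number by at most `2`.
-/

open Set

section MaxImageSeq

variable {α : Type*} [TopologicalSpace α] [LinearOrder α]

def IsMaxImageSeq (S : Set (α ≃ₜ α)) (x : ℤ → α) : Prop :=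
  ∀ n : ℤ, IsGreatest {y : α | ∃ g ∈ S, y = g (x n)} (x (n + 1))

lemma Homeomorph.le_apply_or_le_symm_apply {g : α ≃ₜ α} (hg : Monotone g) (p : α) :
    p ≤ g p ∨ p ≤ g.symm p := by
  refine (le_total p (g.symm p)).symm.imp (fun h => ?_) id
  simpa using hg h

variable {S : Set (α ≃ₜ α)} {x : ℤ → α}

namespace IsMaxImageSeq

lemma apply_le_succ (hx : IsMaxImageSeq S x) {g : α ≃ₜ α} (hg : g ∈ S) (n : ℤ) :
    g (x n) ≤ x (n + 1) :=
  (hx n).2 ⟨g, hg, rfl⟩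

lemma pred_le_apply (hx : IsMaxImageSeq S x) (hmono : ∀ g ∈ S, Monotone ⇑g)
    (hsym : ∀ g ∈ S, g.symm ∈ S) {g : α ≃ₜ α} (hg : g ∈ S) (n : ℤ) :
    x (n - 1) ≤ g (x n) := by
  have h := hmono g hg (hx.apply_le_succ (hsym g hg) (n - 1))
  rwa [sub_add_cancel, Homeomorph.apply_symm_apply] at h

lemma monotone (hx : IsMaxImageSeq S x) (hmono : ∀ g ∈ S, Monotone ⇑g)
    (hsym : ∀ g ∈ S, g.symm ∈ S) : Monotone x := by
  refine monotone_int_of_le_succ fun n => ?_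
  obtain ⟨g, hg, hgx⟩ := (hx n).1
  rcases Homeomorph.le_apply_or_le_symm_apply (hmono g hg) (x n) with h | h
  · exact hgx ▸ h
  · exact h.trans (hx.apply_le_succ (hsym g hg) n)

end IsMaxImageSeq

end MaxImageSeq

lemma Homeomorph.strictMono_of_monotone_of_apply_eq_int (φ : ℝ ≃ₜ ℝ) {x : ℤ → ℝ}
    (hx : Monotone x) (hφx : ∀ n : ℤ, φ (x n) = n) : StrictMono φ := by
  refine (φ.continuous.strictMono_of_inj φ.injective).resolve_right fun hanti => ?_
  have h := hanti.antitone (hx zero_le_one)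
  rw [hφx, hφx] at h
  norm_num at h

lemma Monotone.sub_two_le_and_le_add_two {f : ℝ → ℝ} (hf : Monotone f)
    (hint : ∀ n : ℤ, (n : ℝ) - 1 ≤ f n ∧ f n ≤ n + 1) (t : ℝ) :
    t - 2 ≤ f t ∧ f t ≤ t + 2 := by
  obtain ⟨hlo, -⟩ := hint ⌊t⌋
  obtain ⟨-, hhi⟩ := hint (⌊t⌋ + 1)
  have hft : f ⌊t⌋ ≤ f t := hf (Int.floor_le t)
  have htf : f t ≤ f (⌊t⌋ + 1 : ℤ) := hf (by exact_mod_cast (Int.lt_floor_add_one t).le)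
  push_cast at hhi htf
  constructor <;> linarith [Int.floor_le t, Int.lt_floor_add_one t]

theorem conjugated_generators_bounded_displacement_general
    (S : Finset (ℝ ≃ₜ ℝ))
    (hmono : ∀ g ∈ S, Monotone ⇑g)
    (hsym : ∀ g ∈ S, g.symm ∈ S)
    (x : ℤ → ℝ)
    (hxrec : ∀ n : ℤ, IsGreatest {y : ℝ | ∃ g ∈ S, y = g (x n)} (x (n + 1)))
    (φ : ℝ ≃ₜ ℝ)
    (hφ : ∀ n : ℤ, ∀ t ∈ Icc (x n) (x (n + 1)),
      φ t = (n : ℝ) + (t - x n) / (x (n + 1) - x n))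
    :
    ∀ g ∈ S, ∀ t : ℝ,
      t - 2 ≤ φ (g (φ.symm t)) ∧ φ (g (φ.symm t)) ≤ t + 2 := by
  have hseq : IsMaxImageSeq (S : Set (ℝ ≃ₜ ℝ)) x := hxrec
  have hx : Monotone x := hseq.monotone hmono hsym
  have hφx (n : ℤ) : φ (x n) = n := by
    simpa using hφ n (x n) ⟨le_rfl, hx (Int.le_add_one le_rfl)⟩
  have hφmono := φ.strictMono_of_monotone_of_apply_eq_int hx hφx
  have hφsymm (n : ℤ) : φ.symm n = x n := φ.symm_apply_eq.2 (hφx n).symm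
  intro g hg
  refine Monotone.sub_two_le_and_le_add_two (fun a b hab => ?_) fun n => ?_
  · refine hφmono.monotone (hmono g hg ?_)
    rwa [← hφmono.le_iff_le, φ.apply_symm_apply, φ.apply_symm_apply]
  · rw [hφsymm]
    constructor
    · calc (n : ℝ) - 1 = φ (x (n - 1)) := by rw [hφx]; push_cast; ring
        _ ≤ φ (g (x n)) := hφmono.monotone (hseq.pred_le_apply hmono hsym hg n)
    · calc φ (g (x n)) ≤ φ (x (n + 1)) := hφmono.monotone (hseq.apply_le_succ hg n)
        _ = n + 1 := by rw [hφx]; push_cast; ring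

/-- After the piecewise-affine conjugation `φ` sending `x_n` to `n`, every generator
`g ∈ 𝒢` satisfies `t - 2 ≤ ρ(g)(t) ≤ t + 2`, where `ρ(g) = φ ∘ g ∘ φ⁻¹`. -/
theorem conjugated_generators_bounded_displacement
    (S : Finset (ℝ ≃ₜ ℝ)) (hne : S.Nonempty)
    (hmono : ∀ g ∈ S, Monotone ⇑g) (K : ℝ) (hK : 1 ≤ K)
    (hbil : ∀ g ∈ S, ∀ x y : ℝ, K⁻¹ * |y - x| ≤ |g y - g x| ∧ |g y - g x| ≤ K * |y - x|)
    (hsym : ∀ g ∈ S, g.symm ∈ S)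
    (hnofix : ∀ p : ℝ, ∃ g ∈ S, g p ≠ p)
    (x : ℤ → ℝ) (hx0 : x 0 = 0)
    (hxrec : ∀ n : ℤ, IsGreatest {y : ℝ | ∃ g ∈ S, y = g (x n)} (x (n + 1)))
    (φ : ℝ ≃ₜ ℝ)
    (hφ : ∀ n : ℤ, ∀ t ∈ Icc (x n) (x (n + 1)),
      φ t = (n : ℝ) + (t - x n) / (x (n + 1) - x n))
    :
    ∀ g ∈ S, ∀ t : ℝ,
      t - 2 ≤ φ (g (φ.symm t)) ∧ φ (g (φ.symm t)) ≤ t + 2 :=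
  conjugated_generators_bounded_displacement_general S hmono hsym x hxrec φ hφ
end

section
/- In the setting of the piecewise-affine conjugation φ, writing x_{n+1} = g_n(x_n) with g_n ∈ 𝒢, the conjugated action ρ satisfies ρ(g_{n+1}g_n)(n) = n+2 for every n ∈ ℤ, and consequently for every x ∈ ℝ, ρ(g_{n+1}g_n)(x) ≥ x + 1 where n = ⌊x⌋. -/
open Set

/-! Since `𝒢` is symmetric and has no global fixed point, some generator pushes each `x_n` to the
right, so `(x_n)` is strictly increasing and `φ` is an increasing homeomorphism with `φ(x_n) = n`.
Then `ρ(g_{n+1} g_n)` is increasing and sends `n` to `n + 2`, and for `⌊t⌋ = n` this gives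
`ρ(g_{n+1} g_n)(t) ≥ n + 2 > t + 1`. -/

theorem Equiv.lt_apply_or_lt_symm_apply_of_apply_ne {α : Type*} [LinearOrder α] {g : α ≃ α}
    (hg : Monotone g) {p : α} (hp : g p ≠ p) : p < g p ∨ p < g.symm p := by
  refine hp.lt_or_gt.symm.imp_right fun hgp => ?_
  by_contra! hle
  simpa using (hg hle).trans_lt hgp

theorem strictMono_of_isGreatest_image {α : Type*} [TopologicalSpace α] [LinearOrder α]
    {S : Set (α ≃ₜ α)} (hmono : ∀ g ∈ S, Monotone g) (hsym : ∀ g ∈ S, g.symm ∈ S)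
    (hnofix : ∀ p : α, ∃ g ∈ S, g p ≠ p) {x : ℤ → α}
    (hxrec : ∀ n : ℤ, IsGreatest {y : α | ∃ g ∈ S, y = g (x n)} (x (n + 1))) :
    StrictMono x := by
  refine strictMono_int_of_lt_succ fun n => ?_
  obtain ⟨g, hg, hgp⟩ := hnofix (x n)
  rcases Equiv.lt_apply_or_lt_symm_apply_of_apply_ne (g := g.toEquiv) (hmono g hg) hgp with h | h
  · exact h.trans_le ((hxrec n).2 ⟨g, hg, rfl⟩)
  · exact h.trans_le ((hxrec n).2 ⟨g.symm, hsym g hg, rfl⟩)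

theorem add_one_le_of_monotone_of_apply_floor {f : ℝ → ℝ} (hf : Monotone f) {t : ℝ}
    (hft : f ⌊t⌋ = ⌊t⌋ + 2) : t + 1 ≤ f t :=
  calc t + 1 ≤ ⌊t⌋ + 2 := by linarith [Int.lt_floor_add_one t]
    _ = f ⌊t⌋ := hft.symm
    _ ≤ f t := hf (Int.floor_le t)

theorem conjugated_action_uniform_advance_general
    (S : Finset (ℝ ≃ₜ ℝ))
    (hmono : ∀ g ∈ S, Monotone ⇑g)
    (hsym : ∀ g ∈ S, g.symm ∈ S)
    (hnofix : ∀ p : ℝ, ∃ g ∈ S, g p ≠ p)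
    (x : ℤ → ℝ)
    (hxrec : ∀ n : ℤ, IsGreatest {y : ℝ | ∃ g ∈ S, y = g (x n)} (x (n + 1)))
    (φ : ℝ ≃ₜ ℝ)
    (hφ : ∀ n : ℤ, ∀ t ∈ Icc (x n) (x (n + 1)),
      φ t = (n : ℝ) + (t - x n) / (x (n + 1) - x n))
    (gseq : ℤ → (ℝ ≃ₜ ℝ)) (hgseq : ∀ n : ℤ, gseq n ∈ S ∧ gseq n (x n) = x (n + 1)) :
    (∀ n : ℤ, φ (gseq (n + 1) (gseq n (φ.symm (n : ℝ)))) = (n : ℝ) + 2) ∧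
    ∀ t : ℝ, t + 1 ≤ φ (gseq (⌊t⌋ + 1) (gseq ⌊t⌋ (φ.symm t))) := by
  have hx : StrictMono x := strictMono_of_isGreatest_image hmono hsym hnofix hxrec
  have hnode (n : ℤ) : φ (x n) = n := by
    simpa using hφ n (x n) ⟨le_rfl, (hx (lt_add_one n)).le⟩
  have hφmono : StrictMono φ :=
    (φ.continuous.strictMono_of_inj φ.injective).resolve_right fun hanti =>
      (hanti (hx (lt_add_one 0))).not_gt (by simp [hnode])
  have hφsymm (n : ℤ) : φ.symm n = x n := φ.symm_apply_eq.2 (hnode n).symm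
  have hnode_two (n : ℤ) : φ (gseq (n + 1) (gseq n (φ.symm n))) = n + 2 := by
    rw [hφsymm, (hgseq n).2, (hgseq (n + 1)).2, add_assoc, hnode]
    push_cast
    ring
  refine ⟨hnode_two, fun t => add_one_le_of_monotone_of_apply_floor
    (f := fun s => φ (gseq (⌊t⌋ + 1) (gseq ⌊t⌋ (φ.symm s)))) ?_ (hnode_two ⌊t⌋)⟩
  have hφsymm_mono : Monotone φ.symm := fun a b hab => hφmono.le_iff_le.1 (by simpa using hab)
  exact hφmono.monotone.comp <| (hmono _ (hgseq _).1).comp <| (hmono _ (hgseq _).1).comp hφsymm_mono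

/-- Writing `x_{n+1} = g_n (x_n)` with `g_n ∈ 𝒢`, the conjugated action
`ρ(g) = φ ∘ g ∘ φ⁻¹` satisfies `ρ(g_{n+1} g_n)(n) = n + 2` for every `n ∈ ℤ`, and hence
`ρ(g_{n+1} g_n)(t) ≥ t + 1` for every real `t`, where `n = ⌊t⌋`. -/
theorem conjugated_action_uniform_advance
    (S : Finset (ℝ ≃ₜ ℝ)) (hne : S.Nonempty)
    (hmono : ∀ g ∈ S, Monotone ⇑g) (K : ℝ) (hK : 1 ≤ K)
    (hbil : ∀ g ∈ S, ∀ x y : ℝ, K⁻¹ * |y - x| ≤ |g y - g x| ∧ |g y - g x| ≤ K * |y - x|)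
    (hsym : ∀ g ∈ S, g.symm ∈ S)
    (hnofix : ∀ p : ℝ, ∃ g ∈ S, g p ≠ p)
    (x : ℤ → ℝ) (hx0 : x 0 = 0)
    (hxrec : ∀ n : ℤ, IsGreatest {y : ℝ | ∃ g ∈ S, y = g (x n)} (x (n + 1)))
    (φ : ℝ ≃ₜ ℝ)
    (hφ : ∀ n : ℤ, ∀ t ∈ Icc (x n) (x (n + 1)),
      φ t = (n : ℝ) + (t - x n) / (x (n + 1) - x n))
    (gseq : ℤ → (ℝ ≃ₜ ℝ)) (hgseq : ∀ n : ℤ, gseq n ∈ S ∧ gseq n (x n) = x (n + 1)) :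
    (∀ n : ℤ, φ (gseq (n + 1) (gseq n (φ.symm (n : ℝ)))) = (n : ℝ) + 2) ∧
    ∀ t : ℝ, t + 1 ≤ φ (gseq (⌊t⌋ + 1) (gseq ⌊t⌋ (φ.symm t))) :=
  conjugated_action_uniform_advance_general S hmono hsym hnofix x hxrec φ hφ gseq hgseq
end

section
/- Every action of a finitely generated group on ℝ by orientation-preserving homeomorphisms without global fixed point is topologically conjugated to an action ρ by bilipschitz homeomorphisms for which there exist constants K ≥ 1 and 0 < C < D and a finite symmetric generating set 𝒢' such that every ρ(g), g ∈ 𝒢', is K-bilipschitz and for every x ∈ ℝ: x - D ≤ min_{g∈𝒢'} ρ(g)(x) ≤ x - C and x + C ≤ max_{g∈𝒢'} ρ(g)(x) ≤ x + D. -/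
noncomputable section

noncomputable instance : Group (ℝ ≃ₜ ℝ) where
  mul f g := g.trans f
  one := Homeomorph.refl ℝ
  inv := Homeomorph.symm
  mul_assoc f g h := rfl
  one_mul f := by ext x; rfl
  mul_one f := by ext x; rfl
  inv_mul_cancel f := by ext x; exact f.symm_apply_apply x

/-!
Take a finite symmetric generating set `S`. Without a global fixed point every `x` is moved to
the right by some generator, so `T x = max_{g ∈ S} g x` is a fixed-point-free increasing
homeomorphism, and a fundamental domain of `T` gives a coordinate `ψ` with `ψ ∘ T = ψ + 1`. In it
each generator moves points by at most `1`, and some generator by exactly `+1`, another by `-1`.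

To make the generators bilipschitz, average `ψ` along the random walk on `S`: with
`P f = 𝔼_{g ∈ S} f ∘ g`, put `φ = ∑ₙ 2⁻ⁿ Pⁿψ`. The term `n = 0` gives
`φ x - φ y ≥ ψ x - ψ y` for `y ≤ x`, the bound `|Pⁿψ - ψ| ≤ n` gives `|φ - 2ψ| ≤ 2`, and since an
increment of `f ∘ g` is at most `#S` times the increment of `P f`, shifting the series by one
index gives `φ (g x) - φ (g y) ≤ 2 #S (φ x - φ y)`. Hence `φ` conjugates the generators to
`2 #S`-bilipschitz maps displacing every point by between `1` and `6`.
-/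

open Filter
open scoped BigOperators

theorem tendsto_iterate_atTop_of_lt_apply {α : Type*} [ConditionallyCompleteLinearOrder α]
    [TopologicalSpace α] [OrderTopology α] {f : α → α} (hf : Continuous f)
    (hlt : ∀ x, x < f x) (x : α) : Tendsto (fun n => f^[n] x) atTop atTop := by
  have hmono : Monotone fun n => f^[n] x := monotone_nat_of_le_succ fun n => by
    rw [Function.iterate_succ_apply']
    exact (hlt _).le
  refine (tendsto_atTop_of_monotone hmono).resolve_right ?_
  rintro ⟨l, hl⟩
  exact (hlt l).ne' (isFixedPt_of_tendsto_iterate hl hf.continuousAt)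

namespace OrderIso

theorem coe_pow {α : Type*} [Preorder α] (T : α ≃o α) (n : ℕ) : ⇑(T ^ n) = T^[n] := by
  induction n with
  | zero => rfl
  | succ n ih => rw [pow_succ', RelIso.coe_mul, ih, Function.iterate_succ']

theorem zpow_apply_zpow {α : Type*} [Preorder α] (T : α ≃o α) (m n : ℤ) (x : α) :
    (T ^ m) ((T ^ n) x) = (T ^ (m + n)) x := by
  rw [zpow_add, RelIso.mul_apply]

variable {T : ℝ ≃o ℝ}

theorem strictMono_zpow_apply (hT : ∀ x, x < T x) (x : ℝ) :
    StrictMono fun n : ℤ => (T ^ n) x :=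
  strictMono_int_of_lt_succ fun n => by
    simp only [zpow_add_one, RelIso.mul_apply]
    exact (T ^ n).strictMono (hT x)

theorem exists_lt_pow_apply (hT : ∀ x, x < T x) (x y : ℝ) : ∃ n : ℕ, y < (T ^ n) x := by
  simpa only [coe_pow] using
    ((tendsto_iterate_atTop_of_lt_apply T.continuous hT x).eventually_gt_atTop y).exists

theorem exists_zpow_apply_le_lt (hT : ∀ x, x < T x) (x : ℝ) :
    ∃ n : ℤ, (T ^ n) 0 ≤ x ∧ x < (T ^ (n + 1)) 0 := by
  have hmono := strictMono_zpow_apply hT 0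
  obtain ⟨m, hm⟩ := exists_lt_pow_apply hT 0 x
  obtain ⟨k, hk⟩ := exists_lt_pow_apply hT x 0
  have hbdd : ∀ n : ℤ, (T ^ n) 0 ≤ x → n ≤ m := fun n hn =>
    hmono.le_iff_le.1 (hn.trans (by exact_mod_cast hm.le))
  have hbelow : (T ^ (-(k : ℤ))) 0 ≤ x := by
    have := (T ^ (-(k : ℤ))).monotone hk.le
    rwa [← zpow_natCast, zpow_apply_zpow, neg_add_cancel, zpow_zero, RelIso.one_apply] at this
  obtain ⟨n, hn, hmax⟩ := Int.exists_greatest_of_bdd ⟨m, hbdd⟩ ⟨_, hbelow⟩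
  exact ⟨n, hn, lt_of_not_ge fun h => (hmax _ h).not_gt (lt_add_one n)⟩

def orbitIndex (T : ℝ ≃o ℝ) (x : ℝ) : ℤ := sSup {n : ℤ | (T ^ n) 0 ≤ x}

theorem orbitIndex_eq (hT : ∀ x, x < T x) {n : ℤ} {x : ℝ} (h₁ : (T ^ n) 0 ≤ x)
    (h₂ : x < (T ^ (n + 1)) 0) : orbitIndex T x = n := by
  refine IsGreatest.csSup_eq ⟨h₁, fun m hm => ?_⟩
  by_contra! h
  exact (hm.trans_lt h₂).not_ge ((strictMono_zpow_apply hT 0).monotone h)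

/-- `[0, T 0)` is a fundamental domain of `T`; it is sent affinely onto `[0, 1)`, and its image
under `Tⁿ` onto `[n, n + 1)`. -/
def translationCoord (T : ℝ ≃o ℝ) (x : ℝ) : ℝ :=
  orbitIndex T x + (T ^ (-orbitIndex T x)) x / T 0

theorem translationCoord_eq (hT : ∀ x, x < T x) {n : ℤ} {x : ℝ} (h₁ : (T ^ n) 0 ≤ x)
    (h₂ : x < (T ^ (n + 1)) 0) : translationCoord T x = n + (T ^ (-n)) x / T 0 := by
  rw [translationCoord, orbitIndex_eq hT h₁ h₂]

theorem translationCoord_mem_Ico (hT : ∀ x, x < T x) {n : ℤ} {x : ℝ} (h₁ : (T ^ n) 0 ≤ x)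
    (h₂ : x < (T ^ (n + 1)) 0) : translationCoord T x ∈ Set.Ico (n : ℝ) (n + 1) := by
  have h0 : 0 < T 0 := hT 0
  have hlo : 0 ≤ (T ^ (-n)) x := by
    have := (T ^ (-n)).monotone h₁
    rwa [zpow_apply_zpow, neg_add_cancel, zpow_zero, RelIso.one_apply] at this
  have hhi : (T ^ (-n)) x < T 0 := by
    have := (T ^ (-n)).strictMono h₂
    rwa [zpow_apply_zpow, neg_add_cancel_left, zpow_one] at this
  rw [translationCoord_eq hT h₁ h₂]
  constructor
  · have := div_nonneg hlo h0.le
    linarith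
  · have := (div_lt_one h0).2 hhi
    linarith

theorem translationCoord_apply (hT : ∀ x, x < T x) (x : ℝ) :
    translationCoord T (T x) = translationCoord T x + 1 := by
  obtain ⟨n, h₁, h₂⟩ := exists_zpow_apply_le_lt hT x
  have hTx : T x = (T ^ (1 : ℤ)) x := by rw [zpow_one]
  have h₁' : (T ^ (n + 1)) 0 ≤ T x := by
    rw [hTx, add_comm, zpow_add, RelIso.mul_apply]
    exact (T ^ (1 : ℤ)).monotone h₁
  have h₂' : T x < (T ^ (n + 1 + 1)) 0 := by
    rw [hTx, add_comm, zpow_add, RelIso.mul_apply]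
    exact (T ^ (1 : ℤ)).strictMono h₂
  rw [translationCoord_eq hT h₁ h₂, translationCoord_eq hT h₁' h₂', hTx, zpow_apply_zpow,
    show -(n + 1) + 1 = -n by ring]
  push_cast
  ring

theorem translationCoord_strictMono (hT : ∀ x, x < T x) : StrictMono (translationCoord T) := by
  intro x y hxy
  obtain ⟨n, hx₁, hx₂⟩ := exists_zpow_apply_le_lt hT x
  obtain ⟨m, hy₁, hy₂⟩ := exists_zpow_apply_le_lt hT y
  have hx := translationCoord_mem_Ico hT hx₁ hx₂
  have hy := translationCoord_mem_Ico hT hy₁ hy₂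
  rcases lt_trichotomy n m with hnm | rfl | hmn
  · have : (n : ℝ) + 1 ≤ m := by exact_mod_cast hnm
    linarith [hx.2, hy.1]
  · rw [translationCoord_eq hT hx₁ hx₂, translationCoord_eq hT hy₁ hy₂]
    gcongr
    exact hT 0
  · have : (T ^ (m + 1)) 0 ≤ (T ^ n) 0 := (strictMono_zpow_apply hT 0).monotone hmn
    linarith

theorem translationCoord_surjective (hT : ∀ x, x < T x) :
    Function.Surjective (translationCoord T) := by
  intro y
  set n := ⌊y⌋
  have h0 : 0 < T 0 := hT 0
  have ht₀ : 0 ≤ (y - n) * T 0 := mul_nonneg (by linarith [Int.floor_le y]) h0.le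
  have ht₁ : (y - n) * T 0 < T 0 := by
    have : y - n < 1 := by linarith [Int.lt_floor_add_one y]
    nlinarith
  have h₁ : (T ^ n) 0 ≤ (T ^ n) ((y - n) * T 0) := (T ^ n).monotone ht₀
  have h₂ : (T ^ n) ((y - n) * T 0) < (T ^ (n + 1)) 0 := by
    rw [zpow_add_one, RelIso.mul_apply]
    exact (T ^ n).strictMono ht₁
  refine ⟨(T ^ n) ((y - n) * T 0), ?_⟩
  rw [translationCoord_eq hT h₁ h₂, zpow_apply_zpow, neg_add_cancel, zpow_zero,
    RelIso.one_apply, mul_div_cancel_right₀ _ h0.ne', add_sub_cancel]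

theorem exists_conj_add_one (hT : ∀ x, x < T x) : ∃ ψ : ℝ ≃o ℝ, ∀ x, ψ (T x) = ψ x + 1 :=
  ⟨StrictMono.orderIsoOfSurjective _ (translationCoord_strictMono hT)
    (translationCoord_surjective hT), translationCoord_apply hT⟩

end OrderIso

open scoped Pointwise in
theorem Subgroup.FG.exists_symm_finset_closure_eq {G : Type*} [Group G] {H : Subgroup G}
    (hH : H.FG) : ∃ S : Finset G, (∀ g ∈ S, g⁻¹ ∈ S) ∧ Subgroup.closure (S : Set G) = H := by
  classical
  obtain ⟨S₀, rfl⟩ := hH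
  refine ⟨S₀ ∪ S₀⁻¹, fun g hg => ?_, ?_⟩
  · simpa [Finset.mem_inv', or_comm] using hg
  · rw [Finset.coe_union, Finset.coe_inv, Subgroup.closure_union, Subgroup.closure_inv, sup_idem]

section Generators

variable {S : Finset (ℝ ≃ₜ ℝ)}

theorem exists_lt_apply_of_symm_of_not_fixed (hmono : ∀ g ∈ S, Monotone g)
    (hinv : ∀ g ∈ S, g⁻¹ ∈ S) (hnofix : ∀ x, ∃ g ∈ Subgroup.closure (S : Set (ℝ ≃ₜ ℝ)), g x ≠ x)
    (x : ℝ) : ∃ g ∈ S, x < g x := by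
  by_contra! h
  have hfix : ∀ g ∈ S, g x = x := fun g hg =>
    (h g hg).antisymm (by simpa using hmono g hg (h g⁻¹ (hinv g hg)))
  obtain ⟨g, hg, hgx⟩ := hnofix x
  refine hgx (Subgroup.closure_induction (p := fun g _ => g x = x) hfix rfl
    (fun g h _ _ hg hh => ?_) (fun g _ hg => ?_) hg)
  · rw [Homeomorph.mul_apply, hh, hg]
  · rw [Homeomorph.inv_apply, Homeomorph.symm_apply_eq, hg]

theorem exists_orderIso_apply_eq_max (hne : S.Nonempty) (hmono : ∀ g ∈ S, Monotone g) :
    ∃ T : ℝ ≃o ℝ, ∀ x, (∀ g ∈ S, g x ≤ T x) ∧ ∃ g ∈ S, g x = T x := by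
  set f : ℝ → ℝ := fun x => S.sup' hne fun g => g x
  have hstrict : StrictMono f := fun x y hxy =>
    (Finset.sup'_lt_iff _).2 fun g hg =>
      ((hmono g hg).strictMono_of_injective g.injective hxy).trans_le
        (Finset.le_sup' (fun g : ℝ ≃ₜ ℝ => g y) hg)
  have hsurj : Function.Surjective f := fun y => by
    obtain ⟨g₀, hg₀, hx⟩ := Finset.exists_mem_eq_inf' hne fun g => g⁻¹ y
    refine ⟨S.inf' hne fun g => g⁻¹ y, le_antisymm (Finset.sup'_le _ _ fun g hg => ?_) ?_⟩
    · calc g (S.inf' hne fun g => g⁻¹ y) ≤ g (g⁻¹ y) := hmono g hg (Finset.inf'_le _ hg)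
        _ = y := g.apply_symm_apply y
    · calc y = g₀ (g₀⁻¹ y) := (g₀.apply_symm_apply y).symm
        _ ≤ f _ := hx ▸ Finset.le_sup' (fun g : ℝ ≃ₜ ℝ => g (g₀⁻¹ y)) hg₀
  refine ⟨StrictMono.orderIsoOfSurjective f hstrict hsurj, fun x =>
    ⟨fun g hg => Finset.le_sup' (fun g : ℝ ≃ₜ ℝ => g x) hg, ?_⟩⟩
  obtain ⟨g, hg, h⟩ := Finset.exists_mem_eq_sup' hne fun g => g x
  exact ⟨g, hg, h.symm⟩

/-- `ψ` linearizes `x ↦ max_{g ∈ S} g x` to the unit translation. -/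
theorem exists_orderIso_displacement (hmono : ∀ g ∈ S, Monotone g) (hinv : ∀ g ∈ S, g⁻¹ ∈ S)
    (hmove : ∀ x, ∃ g ∈ S, x < g x) :
    ∃ ψ : ℝ ≃o ℝ, ∀ x, (∀ g ∈ S, |ψ (g x) - ψ x| ≤ 1) ∧
      (∃ g ∈ S, ψ (g x) = ψ x + 1) ∧ ∃ g ∈ S, ψ (g x) = ψ x - 1 := by
  obtain ⟨g₀, hg₀, -⟩ := hmove 0
  obtain ⟨T, hT⟩ := exists_orderIso_apply_eq_max ⟨g₀, hg₀⟩ hmono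
  have hlt : ∀ x, x < T x := fun x => by
    obtain ⟨g, hg, hx⟩ := hmove x
    exact hx.trans_le ((hT x).1 g hg)
  obtain ⟨ψ, hψ⟩ := OrderIso.exists_conj_add_one hlt
  refine ⟨ψ, fun x => ⟨fun g hg => abs_le.2 ⟨?_, ?_⟩, ?_, ?_⟩⟩
  · have hx : x ≤ T (g x) := by simpa using (hT (g x)).1 _ (hinv g hg)
    linarith [ψ.monotone hx, hψ (g x)]
  · linarith [ψ.monotone ((hT x).1 g hg), hψ x]
  · obtain ⟨g, hg, h⟩ := (hT x).2
    exact ⟨g, hg, by rw [h, hψ]⟩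
  · obtain ⟨g, hg, h⟩ := (hT (T.symm x)).2
    rw [T.apply_symm_apply] at h
    refine ⟨g⁻¹, hinv g hg, ?_⟩
    have hx : g⁻¹ x = T.symm x := (Homeomorph.symm_apply_eq g).2 h.symm
    have hTx := hψ (T.symm x)
    rw [T.apply_symm_apply] at hTx
    rw [hx]
    linarith

end Generators

def stepAverage (S : Finset (ℝ ≃ₜ ℝ)) (f : ℝ → ℝ) (x : ℝ) : ℝ := 𝔼 g ∈ S, f (g x)

section StepAverage

variable {S : Finset (ℝ ≃ₜ ℝ)} {f ψ : ℝ → ℝ}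

theorem stepAverage_monotone (hmono : ∀ g ∈ S, Monotone g) (hf : Monotone f) :
    Monotone (stepAverage S f) := fun _ _ hxy =>
  Finset.expect_le_expect fun g hg => hf (hmono g hg hxy)

theorem continuous_stepAverage (hf : Continuous f) : Continuous (stepAverage S f) := by
  show Continuous fun x => 𝔼 g ∈ S, f (g x)
  simp only [Finset.expect_eq_sum_div_card]
  exact (continuous_finsetSum _ fun g _ => hf.comp g.continuous).div_const _

theorem abs_stepAverage_sub_le (hne : S.Nonempty) {x a r : ℝ}
    (h : ∀ g ∈ S, |f (g x) - a| ≤ r) : |stepAverage S f x - a| ≤ r := by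
  have : stepAverage S f x - a = 𝔼 g ∈ S, (f (g x) - a) := by
    rw [Finset.expect_sub_distrib, Finset.expect_const hne, stepAverage]
  rw [this]
  exact (Finset.abs_expect_le _ _).trans (Finset.expect_le hne h)

theorem sub_le_card_mul_stepAverage_sub (hmono : ∀ g ∈ S, Monotone g) (hf : Monotone f)
    {g : ℝ ≃ₜ ℝ} (hg : g ∈ S) {x y : ℝ} (hxy : y ≤ x) :
    f (g x) - f (g y) ≤ S.card * (stepAverage S f x - stepAverage S f y) := by
  rw [stepAverage, stepAverage, ← Finset.expect_sub_distrib, Finset.card_mul_expect]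
  exact Finset.single_le_sum (f := fun g : ℝ ≃ₜ ℝ => f (g x) - f (g y))
    (fun h hh => sub_nonneg.2 (hf (hmono h hh hxy))) hg

theorem monotone_iterate_stepAverage (hmono : ∀ g ∈ S, Monotone g) (hψ : Monotone ψ) (n : ℕ) :
    Monotone ((stepAverage S)^[n] ψ) := by
  induction n with
  | zero => exact hψ
  | succ n ih =>
    rw [Function.iterate_succ_apply']
    exact stepAverage_monotone hmono ih

theorem continuous_iterate_stepAverage (hψ : Continuous ψ) (n : ℕ) :
    Continuous ((stepAverage S)^[n] ψ) := by
  induction n with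
  | zero => exact hψ
  | succ n ih =>
    rw [Function.iterate_succ_apply']
    exact continuous_stepAverage ih

theorem abs_iterate_stepAverage_sub_le (hne : S.Nonempty)
    (hψ : ∀ x, ∀ g ∈ S, |ψ (g x) - ψ x| ≤ 1) (n : ℕ) (x : ℝ) :
    |(stepAverage S)^[n] ψ x - ψ x| ≤ n := by
  induction n generalizing x with
  | zero => simp
  | succ n ih =>
    rw [Function.iterate_succ_apply', Nat.cast_succ]
    exact abs_stepAverage_sub_le hne fun g hg =>
      (abs_sub_le _ (ψ (g x)) _).trans (add_le_add (ih _) (hψ x g hg))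

end StepAverage

theorem hasSum_coe_mul_inv_two_pow : HasSum (fun n : ℕ => (n : ℝ) * 2⁻¹ ^ n) 2 := by
  have := hasSum_coe_mul_geometric_of_norm_lt_one (𝕜 := ℝ) (r := 2⁻¹) (by norm_num)
  rwa [show (2⁻¹ : ℝ) / (1 - 2⁻¹) ^ 2 = 2 by norm_num] at this

def averagedCoord (S : Finset (ℝ ≃ₜ ℝ)) (ψ : ℝ → ℝ) (x : ℝ) : ℝ :=
  ∑' n : ℕ, (2⁻¹ : ℝ) ^ n * (stepAverage S)^[n] ψ x

section AveragedCoord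

variable {S : Finset (ℝ ≃ₜ ℝ)} {ψ : ℝ → ℝ}

theorem norm_inv_two_pow_mul_iterate_sub_le (hne : S.Nonempty)
    (hψ : ∀ x, ∀ g ∈ S, |ψ (g x) - ψ x| ≤ 1) (n : ℕ) (x : ℝ) :
    ‖(2⁻¹ : ℝ) ^ n * ((stepAverage S)^[n] ψ x - ψ x)‖ ≤ n * 2⁻¹ ^ n := by
  rw [norm_mul, Real.norm_eq_abs, Real.norm_eq_abs, abs_of_pos (by positivity), mul_comm]
  gcongr
  exact abs_iterate_stepAverage_sub_le hne hψ n x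

theorem summable_inv_two_pow_mul_iterate (hne : S.Nonempty)
    (hψ : ∀ x, ∀ g ∈ S, |ψ (g x) - ψ x| ≤ 1) (x : ℝ) :
    Summable fun n : ℕ => (2⁻¹ : ℝ) ^ n * (stepAverage S)^[n] ψ x := by
  have hdev := hasSum_coe_mul_inv_two_pow.summable.of_norm_bounded
    (norm_inv_two_pow_mul_iterate_sub_le hne hψ · x)
  have hgeom : Summable fun n : ℕ => (2⁻¹ : ℝ) ^ n * ψ x :=
    (summable_geometric_of_lt_one (by norm_num) (by norm_num)).mul_right _
  simpa [mul_sub] using hdev.add hgeom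

theorem averagedCoord_eq (hne : S.Nonempty) (hψ : ∀ x, ∀ g ∈ S, |ψ (g x) - ψ x| ≤ 1) (x : ℝ) :
    averagedCoord S ψ x =
      2 * ψ x + ∑' n : ℕ, (2⁻¹ : ℝ) ^ n * ((stepAverage S)^[n] ψ x - ψ x) := by
  have hdev := hasSum_coe_mul_inv_two_pow.summable.of_norm_bounded
    (norm_inv_two_pow_mul_iterate_sub_le hne hψ · x)
  have h2 : 2 * ψ x = ∑' n : ℕ, (2⁻¹ : ℝ) ^ n * ψ x := by
    rw [tsum_mul_right, tsum_geometric_inv_two]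
  rw [h2, ← ((summable_geometric_of_lt_one (by norm_num) (by norm_num)).mul_right _).tsum_add hdev,
    averagedCoord]
  exact tsum_congr fun n => by ring

theorem abs_averagedCoord_sub_le (hne : S.Nonempty) (hψ : ∀ x, ∀ g ∈ S, |ψ (g x) - ψ x| ≤ 1)
    (x : ℝ) : |averagedCoord S ψ x - 2 * ψ x| ≤ 2 := by
  rw [averagedCoord_eq hne hψ, add_sub_cancel_left]
  exact tsum_of_norm_bounded hasSum_coe_mul_inv_two_pow
    (norm_inv_two_pow_mul_iterate_sub_le hne hψ · x)

theorem continuous_averagedCoord (hne : S.Nonempty) (hψ : ∀ x, ∀ g ∈ S, |ψ (g x) - ψ x| ≤ 1)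
    (hψc : Continuous ψ) : Continuous (averagedCoord S ψ) := by
  rw [funext (averagedCoord_eq hne hψ)]
  exact (continuous_const.mul hψc).add <| continuous_tsum
    (fun n => continuous_const.mul ((continuous_iterate_stepAverage hψc n).sub hψc))
    hasSum_coe_mul_inv_two_pow.summable (norm_inv_two_pow_mul_iterate_sub_le hne hψ)

theorem summable_inv_two_pow_mul_iterate_sub (hne : S.Nonempty)
    (hψ : ∀ x, ∀ g ∈ S, |ψ (g x) - ψ x| ≤ 1) (x y : ℝ) :
    Summable fun n : ℕ =>
      (2⁻¹ : ℝ) ^ n * ((stepAverage S)^[n] ψ x - (stepAverage S)^[n] ψ y) := by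
  simp_rw [mul_sub]
  exact (summable_inv_two_pow_mul_iterate hne hψ x).sub (summable_inv_two_pow_mul_iterate hne hψ y)

theorem averagedCoord_sub (hne : S.Nonempty) (hψ : ∀ x, ∀ g ∈ S, |ψ (g x) - ψ x| ≤ 1)
    (x y : ℝ) : averagedCoord S ψ x - averagedCoord S ψ y =
      ∑' n : ℕ, (2⁻¹ : ℝ) ^ n * ((stepAverage S)^[n] ψ x - (stepAverage S)^[n] ψ y) := by
  simp_rw [mul_sub]
  exact ((summable_inv_two_pow_mul_iterate hne hψ x).tsum_sub
    (summable_inv_two_pow_mul_iterate hne hψ y)).symm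

theorem sub_le_averagedCoord_sub (hne : S.Nonempty) (hψ : ∀ x, ∀ g ∈ S, |ψ (g x) - ψ x| ≤ 1)
    (hmono : ∀ g ∈ S, Monotone g) (hψm : Monotone ψ) {x y : ℝ} (hxy : y ≤ x) :
    ψ x - ψ y ≤ averagedCoord S ψ x - averagedCoord S ψ y := by
  rw [averagedCoord_sub hne hψ]
  simpa using (summable_inv_two_pow_mul_iterate_sub hne hψ x y).le_tsum 0 fun n _ =>
    mul_nonneg (by positivity) (sub_nonneg.2 (monotone_iterate_stepAverage hmono hψm n hxy))

/-- Increments of `Pⁿψ` along a generator are at most `#S` times increments of `Pⁿ⁺¹ψ`; the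
factor `2` pays for shifting the index of the series. -/
theorem averagedCoord_apply_sub_le (hne : S.Nonempty) (hψ : ∀ x, ∀ g ∈ S, |ψ (g x) - ψ x| ≤ 1)
    (hmono : ∀ g ∈ S, Monotone g) (hψm : Monotone ψ) {g : ℝ ≃ₜ ℝ} (hg : g ∈ S) {x y : ℝ}
    (hxy : y ≤ x) :
    averagedCoord S ψ (g x) - averagedCoord S ψ (g y) ≤
      2 * S.card * (averagedCoord S ψ x - averagedCoord S ψ y) := by
  set a : ℕ → ℝ := fun n => (2⁻¹ : ℝ) ^ n * ((stepAverage S)^[n] ψ x - (stepAverage S)^[n] ψ y)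
  have ha : Summable a := summable_inv_two_pow_mul_iterate_sub hne hψ x y
  have ha₀ : 0 ≤ a 0 := by simpa [a] using hψm hxy
  have hstep : ∀ n, (2⁻¹ : ℝ) ^ n * ((stepAverage S)^[n] ψ (g x) - (stepAverage S)^[n] ψ (g y))
      ≤ 2 * S.card * a (n + 1) := fun n => by
    have := sub_le_card_mul_stepAverage_sub hmono (monotone_iterate_stepAverage hmono hψm n) hg hxy
    rw [← Function.iterate_succ_apply' (stepAverage S)] at this
    calc _ ≤ (2⁻¹ : ℝ) ^ n * (S.card * ((stepAverage S)^[n + 1] ψ x -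
          (stepAverage S)^[n + 1] ψ y)) := by gcongr
      _ = 2 * S.card * a (n + 1) := by simp only [a, pow_succ]; ring
  calc averagedCoord S ψ (g x) - averagedCoord S ψ (g y)
      ≤ ∑' n, 2 * S.card * a (n + 1) := by
        rw [averagedCoord_sub hne hψ]
        exact (summable_inv_two_pow_mul_iterate_sub hne hψ _ _).tsum_le_tsum hstep
          (((summable_nat_add_iff 1).2 ha).mul_left _)
    _ = 2 * S.card * ∑' n, a (n + 1) := tsum_mul_left
    _ ≤ 2 * S.card * ∑' n, a n := by
        rw [ha.tsum_eq_zero_add]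
        gcongr
        linarith
    _ = 2 * S.card * (averagedCoord S ψ x - averagedCoord S ψ y) := by
        rw [averagedCoord_sub hne hψ]

theorem averagedCoord_strictMono (hne : S.Nonempty) (hψ : ∀ x, ∀ g ∈ S, |ψ (g x) - ψ x| ≤ 1)
    (hmono : ∀ g ∈ S, Monotone g) (hψm : StrictMono ψ) : StrictMono (averagedCoord S ψ) :=
  fun x y hxy => by
    linarith [sub_le_averagedCoord_sub hne hψ hmono hψm.monotone hxy.le, hψm hxy]

theorem averagedCoord_surjective (hne : S.Nonempty) (hψ : ∀ x, ∀ g ∈ S, |ψ (g x) - ψ x| ≤ 1)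
    (hψc : Continuous ψ) (htop : Tendsto ψ atTop atTop) (hbot : Tendsto ψ atBot atBot) :
    Function.Surjective (averagedCoord S ψ) := by
  have hclose x := abs_le.1 (abs_averagedCoord_sub_le hne hψ x)
  refine (continuous_averagedCoord hne hψ hψc).surjective ?_ ?_
  · refine tendsto_atTop_mono (fun x => ?_)
      (tendsto_atTop_add_const_right _ (-2) (htop.const_mul_atTop two_pos))
    linarith [hclose x]
  · refine tendsto_atBot_mono (fun x => ?_)
      (tendsto_atBot_add_const_right _ 2 (hbot.const_mul_atBot two_pos))
    linarith [hclose x]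

theorem abs_averagedCoord_apply_sub_le (hne : S.Nonempty)
    (hψ : ∀ x, ∀ g ∈ S, |ψ (g x) - ψ x| ≤ 1) {g : ℝ ≃ₜ ℝ} (hg : g ∈ S) (x : ℝ) :
    |averagedCoord S ψ (g x) - averagedCoord S ψ x| ≤ 6 := by
  have h₁ := abs_le.1 (abs_averagedCoord_sub_le hne hψ (g x))
  have h₂ := abs_le.1 (abs_averagedCoord_sub_le hne hψ x)
  have h₃ := abs_le.1 (hψ x g hg)
  exact abs_le.2 ⟨by linarith, by linarith⟩

end AveragedCoord

theorem bilipschitz_conj_of_sub_le {φ g : ℝ ≃ₜ ℝ} (hφ : StrictMono φ) (hg : Monotone g) {K : ℝ}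
    (hK : 0 < K) (hup : ∀ x y, y ≤ x → φ (g x) - φ (g y) ≤ K * (φ x - φ y))
    (hdown : ∀ x y, y ≤ x → φ x - φ y ≤ K * (φ (g x) - φ (g y))) (x y : ℝ) :
    K⁻¹ * |y - x| ≤ |φ (g (φ.symm y)) - φ (g (φ.symm x))| ∧
      |φ (g (φ.symm y)) - φ (g (φ.symm x))| ≤ K * |y - x| := by
  wlog hxy : x ≤ y generalizing x y
  · rw [abs_sub_comm y, abs_sub_comm (φ (g _))]
    exact this y x (le_of_not_ge hxy)
  obtain ⟨a, rfl⟩ := φ.surjective x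
  obtain ⟨b, rfl⟩ := φ.surjective y
  simp only [Homeomorph.symm_apply_apply]
  have hab : a ≤ b := hφ.le_iff_le.1 hxy
  rw [abs_of_nonneg (sub_nonneg.2 hxy), abs_of_nonneg (sub_nonneg.2 (hφ.monotone (hg hab)))]
  exact ⟨(inv_mul_le_iff₀ hK).2 (hdown b a hab), hup b a hab⟩

theorem exists_conj_bilipschitz_uniformly_displacing {S : Finset (ℝ ≃ₜ ℝ)}
    (hmono : ∀ g ∈ S, Monotone g) (hinv : ∀ g ∈ S, g⁻¹ ∈ S) (hmove : ∀ x, ∃ g ∈ S, x < g x) :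
    ∃ (φ : ℝ ≃ₜ ℝ) (K C D : ℝ), 1 ≤ K ∧ 0 < C ∧ C < D ∧
      (∀ g ∈ S, ∀ x y : ℝ,
        K⁻¹ * |y - x| ≤ |φ (g (φ.symm y)) - φ (g (φ.symm x))| ∧
        |φ (g (φ.symm y)) - φ (g (φ.symm x))| ≤ K * |y - x|) ∧
      (∀ x : ℝ,
        (∀ g ∈ S, x - D ≤ φ (g (φ.symm x))) ∧ (∃ g ∈ S, φ (g (φ.symm x)) ≤ x - C) ∧
        (∃ g ∈ S, x + C ≤ φ (g (φ.symm x))) ∧ (∀ g ∈ S, φ (g (φ.symm x)) ≤ x + D)) := by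
  obtain ⟨g₀, hg₀, -⟩ := hmove 0
  have hne : S.Nonempty := ⟨g₀, hg₀⟩
  obtain ⟨ψ, hψ⟩ := exists_orderIso_displacement hmono hinv hmove
  have hdisp x := (hψ x).1
  have hsub {x y : ℝ} (hxy : y ≤ x) := sub_le_averagedCoord_sub hne hdisp hmono ψ.monotone hxy
  have hlip {g} (hg : g ∈ S) {x y : ℝ} (hxy : y ≤ x) :=
    averagedCoord_apply_sub_le hne hdisp hmono ψ.monotone hg hxy
  have hφmono := averagedCoord_strictMono hne hdisp hmono ψ.strictMono
  set φ := (StrictMono.orderIsoOfSurjective _ hφmono (averagedCoord_surjective hne hdisp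
    ψ.continuous ψ.tendsto_atTop ψ.tendsto_atBot)).toHomeomorph
  have hφ : ∀ x, φ x = averagedCoord S ψ x := fun _ => rfl
  have hcard : (1 : ℝ) ≤ S.card := by exact_mod_cast hne.card_pos
  refine ⟨φ, 2 * S.card, 1, 6, by linarith, one_pos, by norm_num, fun g hg => ?_, fun x => ?_⟩
  · refine bilipschitz_conj_of_sub_le hφmono (hmono g hg) (by positivity)
      (fun x y hxy => hlip hg hxy) (fun x y hxy => ?_)
    simpa [hφ] using hlip (hinv g hg) (hmono g hg hxy)
  · obtain ⟨z, rfl⟩ := φ.surjective x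
    simp only [Homeomorph.symm_apply_apply]
    simp only [hφ]
    have hclose g (hg : g ∈ S) := abs_le.1 (abs_averagedCoord_apply_sub_le hne hdisp hg z)
    obtain ⟨-, ⟨g₁, hg₁, h₁⟩, g₂, hg₂, h₂⟩ := hψ z
    refine ⟨fun g hg => by linarith [hclose g hg], ⟨g₂, hg₂, ?_⟩, ⟨g₁, hg₁, ?_⟩,
      fun g hg => by linarith [hclose g hg]⟩
    · linarith [hsub (ψ.le_iff_le.1 (by linarith) : g₂ z ≤ z)]
    · linarith [hsub (ψ.le_iff_le.1 (by linarith) : z ≤ g₁ z)]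

/-- Every action of a finitely generated group on `ℝ` by orientation-preserving
homeomorphisms without global fixed point is topologically conjugated to an action `ρ`
by bilipschitz homeomorphisms for which there are `K ≥ 1`, `0 < C < D` and a finite
symmetric generating set `𝒢'` with each `ρ(g)`, `g ∈ 𝒢'`, `K`-bilipschitz and
`x - D ≤ min_{g∈𝒢'} ρ(g)(x) ≤ x - C` and `x + C ≤ max_{g∈𝒢'} ρ(g)(x) ≤ x + D`. -/
theorem conjugate_to_uniformly_displacing_bilipschitz (G : Subgroup (ℝ ≃ₜ ℝ))
    (hFG : Group.FG G) (hmono : ∀ g ∈ G, Monotone ⇑g)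
    (hnofix : ∀ p : ℝ, ∃ g ∈ G, g p ≠ p) :
    ∃ (φ : ℝ ≃ₜ ℝ) (K C D : ℝ) (S : Finset (ℝ ≃ₜ ℝ)),
      1 ≤ K ∧ 0 < C ∧ C < D ∧
      (↑S ⊆ (G : Set (ℝ ≃ₜ ℝ))) ∧ (∀ g ∈ S, g⁻¹ ∈ S) ∧
      Subgroup.closure (S : Set (ℝ ≃ₜ ℝ)) = G ∧
      (∀ g ∈ S, ∀ x y : ℝ,
        K⁻¹ * |y - x| ≤ |φ (g (φ.symm y)) - φ (g (φ.symm x))| ∧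
        |φ (g (φ.symm y)) - φ (g (φ.symm x))| ≤ K * |y - x|) ∧
      (∀ x : ℝ,
        (∀ g ∈ S, x - D ≤ φ (g (φ.symm x))) ∧ (∃ g ∈ S, φ (g (φ.symm x)) ≤ x - C) ∧
        (∃ g ∈ S, x + C ≤ φ (g (φ.symm x))) ∧ (∀ g ∈ S, φ (g (φ.symm x)) ≤ x + D)) := by
  obtain ⟨S, hinv, hS⟩ := ((Group.fg_iff_subgroup_fg G).1 hFG).exists_symm_finset_closure_eq
  have hsub : (S : Set (ℝ ≃ₜ ℝ)) ⊆ G := hS ▸ Subgroup.subset_closure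
  have hmonoS : ∀ g ∈ S, Monotone g := fun g hg => hmono g (hsub hg)
  have hmove := exists_lt_apply_of_symm_of_not_fixed hmonoS hinv (hS ▸ hnofix)
  obtain ⟨φ, K, C, D, hK, hC, hCD, hlip, hdisp⟩ :=
    exists_conj_bilipschitz_uniformly_displacing hmonoS hinv hmove
  exact ⟨φ, K, C, D, S, hK, hC, hCD, hsub, hinv, hS, hlip, hdisp⟩
end
end

section
/- Let 𝒢 be a finite set, K ≥ 1, 0 < C < D, and let R be the set of representations ρ of the free group (or a fixed group G) such that each ρ(g), g ∈ 𝒢, is a K-bilipschitz orientation-preserving homeomorphism of ℝ satisfying x - D ≤ min_{g∈𝒢} ρ(g)(x) ≤ x - C ≤ x + C ≤ max_{g∈𝒢} ρ(g)(x) ≤ x + D for all x. Then R, viewed as a subset of Homeo⁺(ℝ)^𝒢 with the product of compact-open topologies, is compact. -/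
noncomputable section

/-- The group `Homeo⁺(ℝ)` of orientation-preserving homeomorphisms of the line. -/
def HomeoPlus : Type := {h : ℝ ≃ₜ ℝ // Monotone ⇑h}

/-- The compact-open topology (equivalently, the topology of uniform convergence on
compact subsets of `ℝ`) on `Homeo⁺(ℝ)`. -/
instance : TopologicalSpace HomeoPlus :=
  TopologicalSpace.induced
    (fun h : HomeoPlus => (⟨⇑h.1, h.1.continuous⟩ : C(ℝ, ℝ))) inferInstance

open Set Topology Filter

namespace RepCompactAux

/-- The natural map from `Homeo⁺(ℝ)` to `C(ℝ, ℝ)`. -/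
def e : HomeoPlus → C(ℝ, ℝ) := fun h => ⟨⇑h.1, h.1.continuous⟩

lemma he : IsInducing e := ⟨rfl⟩

lemma hΦ (𝒢 : Type*) : IsInducing (fun (ρ : 𝒢 → HomeoPlus) g => e (ρ g)) := by
  constructor
  show (Pi.topologicalSpace : TopologicalSpace (𝒢 → HomeoPlus)) = _
  rw [Pi.topologicalSpace, Pi.topologicalSpace, induced_iInf]
  refine iInf_congr fun g => ?_
  rw [induced_compose, he.eq_induced, induced_compose]
  rfl

/-- Auxiliary family: `K`-bilipschitz maps with displacement bounded by `D`. -/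
def B (K D : ℝ) : Set C(ℝ, ℝ) :=
  {h | (∀ x y : ℝ, K⁻¹ * |y - x| ≤ |h y - h x| ∧ |h y - h x| ≤ K * |y - x|) ∧
    ∀ x : ℝ, h x ∈ Icc (x - D) (x + D)}

lemma isCompact_B (K D : ℝ) (hK : 1 ≤ K) : IsCompact (B K D) := by
  have hK0 : (0 : ℝ) < K := lt_of_lt_of_le one_pos hK
  -- the image of `B K D` under the coercion to plain functions
  have himg : ContinuousMap.toFun '' B K D =
      {u : ℝ → ℝ | (∀ x y : ℝ, K⁻¹ * |y - x| ≤ |u y - u x| ∧ |u y - u x| ≤ K * |y - x|) ∧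
        ∀ x : ℝ, u x ∈ Icc (x - D) (x + D)} := by
    ext u
    constructor
    · rintro ⟨h, hh, rfl⟩
      exact hh
    · rintro ⟨h1, h2⟩
      have hcont : Continuous u := by
        have : LipschitzWith K.toNNReal u := by
          refine LipschitzWith.of_dist_le_mul fun x y => ?_
          rw [Real.dist_eq, Real.dist_eq, Real.coe_toNNReal K hK0.le]
          exact (abs_sub_comm (u x) (u y)) ▸ (h1 y x).2
        exact this.continuous
      exact ⟨⟨u, hcont⟩, ⟨h1, h2⟩, rfl⟩
  apply ArzelaAscoli.isCompact_of_equicontinuous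
  · rw [himg]
    have hclosed : IsClosed {u : ℝ → ℝ |
        (∀ x y : ℝ, K⁻¹ * |y - x| ≤ |u y - u x| ∧ |u y - u x| ≤ K * |y - x|) ∧
        ∀ x : ℝ, u x ∈ Icc (x - D) (x + D)} := by
      have h1 : IsClosed {u : ℝ → ℝ |
          ∀ x y : ℝ, K⁻¹ * |y - x| ≤ |u y - u x| ∧ |u y - u x| ≤ K * |y - x|} := by
        have : {u : ℝ → ℝ |
            ∀ x y : ℝ, K⁻¹ * |y - x| ≤ |u y - u x| ∧ |u y - u x| ≤ K * |y - x|} =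
            ⋂ (x : ℝ) (y : ℝ), {u : ℝ → ℝ | K⁻¹ * |y - x| ≤ |u y - u x|} ∩
              {u : ℝ → ℝ | |u y - u x| ≤ K * |y - x|} := by
          ext u; simp only [Set.mem_setOf_eq, Set.mem_iInter, Set.mem_inter_iff] <;> tauto
        rw [this]
        refine isClosed_iInter fun x => isClosed_iInter fun y => IsClosed.inter ?_ ?_
        · exact isClosed_le continuous_const
            (((continuous_apply y).sub (continuous_apply x)).abs)
        · exact isClosed_le (((continuous_apply y).sub (continuous_apply x)).abs)
            continuous_const
      have h2 : IsClosed {u : ℝ → ℝ | ∀ x : ℝ, u x ∈ Icc (x - D) (x + D)} := by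
        have : {u : ℝ → ℝ | ∀ x : ℝ, u x ∈ Icc (x - D) (x + D)} =
            ⋂ (x : ℝ), (fun u : ℝ → ℝ => u x) ⁻¹' Icc (x - D) (x + D) := by
          ext u; simp [Set.mem_iInter]
        rw [this]
        exact isClosed_iInter fun x => IsClosed.preimage (continuous_apply x) isClosed_Icc
      exact (Set.setOf_and ▸ h1.inter h2 :)
    refine IsCompact.of_isClosed_subset
      (isCompact_univ_pi fun x : ℝ => isCompact_Icc (a := x - D) (b := x + D)) hclosed ?_
    intro u hu x _
    exact hu.2 x
  · refine Metric.equicontinuous_of_continuity_modulus (fun t => K * t) ?_ _ ?_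
    · have : Continuous fun t : ℝ => K * t := continuous_const.mul continuous_id
      simpa using this.tendsto 0
    · rintro x y ⟨h, hh⟩
      rw [Real.dist_eq, Real.dist_eq]
      calc |(h : C(ℝ, ℝ)) x - h y| = |h y - h x| := abs_sub_comm _ _
        _ ≤ K * |y - x| := (hh.1 x y).2
        _ = K * |x - y| := by rw [abs_sub_comm]

/-- Construction of an element of `Homeo⁺(ℝ)` from a bilipschitz continuous map with
bounded displacement. -/
lemma exists_homeo (K D : ℝ) (hK : 1 ≤ K) (hD : 0 < D) (f : C(ℝ, ℝ))
    (hb : ∀ x y : ℝ, K⁻¹ * |y - x| ≤ |f y - f x| ∧ |f y - f x| ≤ K * |y - x|)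
    (hd : ∀ x : ℝ, x - D ≤ f x ∧ f x ≤ x + D) :
    ∃ h : HomeoPlus, e h = f := by
  have hK0 : (0 : ℝ) < K := lt_of_lt_of_le one_pos hK
  have hinj : Function.Injective f := by
    intro x y hxy
    by_contra hne
    have h1 := (hb x y).1
    have h2 : |(f : C(ℝ, ℝ)) y - f x| = 0 := by rw [hxy]; simp
    rw [h2] at h1
    have : 0 < K⁻¹ * |y - x| :=
      mul_pos (inv_pos.mpr hK0) (abs_pos.mpr (sub_ne_zero.mpr (Ne.symm hne)))
    linarith
  have hmono : StrictMono f := by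
    rcases f.continuous.strictMono_of_inj hinj with h | h
    · exact h
    · exfalso
      set a : ℝ := |f 0| + D + 1 with ha
      have ha0 : (0 : ℝ) < a := by positivity
      have h1 : f a < f 0 := h ha0
      have h2 : a - D ≤ f a := (hd a).1
      have h3 : (f : C(ℝ, ℝ)) 0 ≤ |f 0| := le_abs_self _
      have : |(f : C(ℝ, ℝ)) 0| + 1 ≤ f a := by rw [ha] at h2; linarith
      linarith
  have hsurj : Function.Surjective f := by
    refine Continuous.surjective f.continuous ?_ ?_
    · refine tendsto_atTop_mono (fun x => (hd x).1) ?_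
      simpa [sub_eq_add_neg] using tendsto_atTop_add_const_right atTop (-D) tendsto_id
    · refine tendsto_atBot_mono (fun x => (hd x).2) ?_
      exact tendsto_atBot_add_const_right atBot D tendsto_id
  let oi : ℝ ≃o ℝ := StrictMono.orderIsoOfSurjective f hmono hsurj
  refine ⟨⟨oi.toHomeomorph, ?_⟩, ?_⟩
  · intro x y hxy
    show oi x ≤ oi y
    exact oi.monotone hxy
  · ext x
    show oi x = f x
    exact congrFun (StrictMono.coe_orderIsoOfSurjective f hmono hsurj) x

end RepCompactAux

open RepCompactAux in
/-- The set `R` of tuples of `K`-bilipschitz orientation-preserving homeomorphisms of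
`ℝ` indexed by a finite set `𝒢` satisfying the displacement condition
`x - D ≤ min_g ρ(g)(x) ≤ x - C ≤ x + C ≤ max_g ρ(g)(x) ≤ x + D` is compact in
`Homeo⁺(ℝ)^𝒢` with the product of compact-open topologies. -/
theorem representation_space_compact (𝒢 : Type*) [Fintype 𝒢] [Nonempty 𝒢]
    (K C D : ℝ) (hK : 1 ≤ K) (hC : 0 < C) (hCD : C < D) :
    IsCompact {ρ : 𝒢 → HomeoPlus |
      (∀ g : 𝒢, ∀ x y : ℝ,
        K⁻¹ * |y - x| ≤ |(ρ g).1 y - (ρ g).1 x| ∧ |(ρ g).1 y - (ρ g).1 x| ≤ K * |y - x|) ∧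
      ∀ x : ℝ,
        (∀ g : 𝒢, x - D ≤ (ρ g).1 x) ∧ (∃ g : 𝒢, (ρ g).1 x ≤ x - C) ∧
        (∃ g : 𝒢, x + C ≤ (ρ g).1 x) ∧ (∀ g : 𝒢, (ρ g).1 x ≤ x + D)} := by
  have hD : 0 < D := hC.trans hCD
  set T : Set (𝒢 → C(ℝ, ℝ)) := {f |
      (∀ g : 𝒢, ∀ x y : ℝ,
        K⁻¹ * |y - x| ≤ |f g y - f g x| ∧ |f g y - f g x| ≤ K * |y - x|) ∧
      ∀ x : ℝ,
        (∀ g : 𝒢, x - D ≤ f g x) ∧ (∃ g : 𝒢, f g x ≤ x - C) ∧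
        (∃ g : 𝒢, x + C ≤ f g x) ∧ (∀ g : 𝒢, f g x ≤ x + D)} with hT
  have hTcompact : IsCompact T := by
    have hTsub : T ⊆ Set.pi Set.univ fun _ : 𝒢 => B K D := by
      intro f hf g _
      exact ⟨hf.1 g, fun x => ⟨(hf.2 x).1 g, (hf.2 x).2.2.2 g⟩⟩
    have hTclosed : IsClosed T := by
      have e1 : IsClosed {f : 𝒢 → C(ℝ, ℝ) |
          ∀ g : 𝒢, ∀ x y : ℝ,
            K⁻¹ * |y - x| ≤ |f g y - f g x| ∧ |f g y - f g x| ≤ K * |y - x|} := by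
        have : {f : 𝒢 → C(ℝ, ℝ) | ∀ g : 𝒢, ∀ x y : ℝ,
              K⁻¹ * |y - x| ≤ |f g y - f g x| ∧ |f g y - f g x| ≤ K * |y - x|} =
            ⋂ (g : 𝒢) (x : ℝ) (y : ℝ),
              {f : 𝒢 → C(ℝ, ℝ) | K⁻¹ * |y - x| ≤ |f g y - f g x|} ∩
              {f : 𝒢 → C(ℝ, ℝ) | |f g y - f g x| ≤ K * |y - x|} := by
          ext f; simp only [Set.mem_setOf_eq, Set.mem_iInter, Set.mem_inter_iff] <;> tauto
        rw [this]
        have hev : ∀ (g : 𝒢) (x : ℝ), Continuous fun f : 𝒢 → C(ℝ, ℝ) => f g x :=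
          fun g x => (continuous_eval_const x).comp (continuous_apply g)
        refine isClosed_iInter fun g => isClosed_iInter fun x => isClosed_iInter fun y =>
          IsClosed.inter ?_ ?_
        · exact isClosed_le continuous_const (((hev g y).sub (hev g x)).abs)
        · exact isClosed_le (((hev g y).sub (hev g x)).abs) continuous_const
      have e2 : IsClosed {f : 𝒢 → C(ℝ, ℝ) | ∀ x : ℝ,
          (∀ g : 𝒢, x - D ≤ f g x) ∧ (∃ g : 𝒢, f g x ≤ x - C) ∧
          (∃ g : 𝒢, x + C ≤ f g x) ∧ (∀ g : 𝒢, f g x ≤ x + D)} := by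
        have hev : ∀ (g : 𝒢) (x : ℝ), Continuous fun f : 𝒢 → C(ℝ, ℝ) => f g x :=
          fun g x => (continuous_eval_const x).comp (continuous_apply g)
        have : {f : 𝒢 → C(ℝ, ℝ) | ∀ x : ℝ,
            (∀ g : 𝒢, x - D ≤ f g x) ∧ (∃ g : 𝒢, f g x ≤ x - C) ∧
            (∃ g : 𝒢, x + C ≤ f g x) ∧ (∀ g : 𝒢, f g x ≤ x + D)} =
            ⋂ (x : ℝ),
              ((⋂ (g : 𝒢), {f : 𝒢 → C(ℝ, ℝ) | x - D ≤ f g x}) ∩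
               ((⋃ (g : 𝒢), {f : 𝒢 → C(ℝ, ℝ) | f g x ≤ x - C}) ∩
                ((⋃ (g : 𝒢), {f : 𝒢 → C(ℝ, ℝ) | x + C ≤ f g x}) ∩
                 (⋂ (g : 𝒢), {f : 𝒢 → C(ℝ, ℝ) | f g x ≤ x + D})))) := by
          ext f
          simp only [Set.mem_setOf_eq, Set.mem_iInter, Set.mem_inter_iff, Set.mem_iUnion] <;> tauto
        rw [this]
        refine isClosed_iInter fun x => ?_
        refine IsClosed.inter (isClosed_iInter fun g =>
            isClosed_le continuous_const (hev g x)) ?_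
        refine IsClosed.inter (isClosed_iUnion_of_finite fun g =>
            isClosed_le (hev g x) continuous_const) ?_
        refine IsClosed.inter (isClosed_iUnion_of_finite fun g =>
            isClosed_le continuous_const (hev g x)) ?_
        exact isClosed_iInter fun g => isClosed_le (hev g x) continuous_const
      have : T = _ ∩ _ := Set.setOf_and (p := fun f : 𝒢 → C(ℝ, ℝ) =>
        ∀ g : 𝒢, ∀ x y : ℝ,
          K⁻¹ * |y - x| ≤ |f g y - f g x| ∧ |f g y - f g x| ≤ K * |y - x|)
        (q := fun f : 𝒢 → C(ℝ, ℝ) => ∀ x : ℝ,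
          (∀ g : 𝒢, x - D ≤ f g x) ∧ (∃ g : 𝒢, f g x ≤ x - C) ∧
          (∃ g : 𝒢, x + C ≤ f g x) ∧ (∀ g : 𝒢, f g x ≤ x + D))
      rw [this]
      exact e1.inter e2
    exact IsCompact.of_isClosed_subset
      (isCompact_univ_pi fun _ => isCompact_B K D hK) hTclosed hTsub
  rw [(hΦ 𝒢).isCompact_iff]
  have himg : (fun (ρ : 𝒢 → HomeoPlus) g => e (ρ g)) '' {ρ : 𝒢 → HomeoPlus |
      (∀ g : 𝒢, ∀ x y : ℝ,
        K⁻¹ * |y - x| ≤ |(ρ g).1 y - (ρ g).1 x| ∧ |(ρ g).1 y - (ρ g).1 x| ≤ K * |y - x|) ∧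
      ∀ x : ℝ,
        (∀ g : 𝒢, x - D ≤ (ρ g).1 x) ∧ (∃ g : 𝒢, (ρ g).1 x ≤ x - C) ∧
        (∃ g : 𝒢, x + C ≤ (ρ g).1 x) ∧ (∀ g : 𝒢, (ρ g).1 x ≤ x + D)} = T := by
    ext f
    constructor
    · rintro ⟨ρ, hρ, rfl⟩
      exact hρ
    · intro hf
      have key : ∀ g : 𝒢, ∃ h : HomeoPlus, e h = f g := by
        intro g
        refine exists_homeo K D hK hD (f g) (hf.1 g) fun x => ⟨(hf.2 x).1 g, (hf.2 x).2.2.2 g⟩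
      choose ρ hρ using key
      have hco : ∀ (g : 𝒢) (x : ℝ), (ρ g).1 x = f g x := by
        intro g x
        rw [← hρ g]
        rfl
      refine ⟨ρ, ⟨fun g x y => ?_, fun x => ?_⟩, funext hρ⟩
      · rw [hco, hco]
        exact hf.1 g x y
      · simp only [hco]
        exact hf.2 x
  rw [himg]
  exact hTcompact
end
end
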